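/- Fix an integer N ≥ 2 and a real number q with 0 < q < 1. Let m, n be nonzero integers and s, t ∈ ℂ \ {0} with s^m t^n = q^{-N}. Then for every x ∈ ℂ \ {0} at which all theta factors occurring are nonzero: (i) if mn < 0, then Y_{m,n}(x;s,t) = ∏_{k=1}^{|m|−1} [U(s^{-k}x)/U(s^{k}x)] · ∏_{k'=1}^{|n|−1} [U(t^{k'}x)/U(t^{-k'}x)]; (ii) if mn > 0, then Y_{m,n}(x;s,t) = ∏_{k=1}^{|m|} [U(s^{-k}x)/U(s^{k}x)] · ∏_{k'=1}^{|n|−1} [U(t^{k'}x)/U(t^{-k'}x)], and also Y_{m,n}(x;s,t) = ∏_{k=1}^{|m|−1} [U(s^{-k}x)/U(s^{k}x)] · ∏_{k'=1}^{|n|} [U(t^{k'}x)/U(t^{-k'}x)]. -/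

import Mathlib

/-- Infinite `q`-Pochhammer symbol `(z;p)_∞ = ∏_{j≥0} (1 − z pʲ)`. -/
noncomputable def qPoch (z p : ℂ) : ℂ := ∏' j : ℕ, (1 - z * p ^ j)

/-- Jacobi Θ function `Θ_p(z) = (z;p)_∞ (p z⁻¹;p)_∞ (p;p)_∞`. -/
noncomputable def ThetaF (p z : ℂ) : ℂ := qPoch z p * qPoch (p * z⁻¹) p * qPoch p p

/-- The function
`U(z) = q^{2/N−2} · Θ_{q^{2N}}(q²z²) Θ_{q^{2N}}(q²z⁻²) / (Θ_{q^{2N}}(z²) Θ_{q^{2N}}(z⁻²))`. -/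
noncomputable def Ufun (N : ℕ) (q : ℝ) (z : ℂ) : ℂ :=
  ((q ^ ((2 : ℝ) / N - 2) : ℝ) : ℂ) *
    (ThetaF ((q : ℂ) ^ (2 * N)) ((q : ℂ) ^ 2 * z ^ 2) *
      ThetaF ((q : ℂ) ^ (2 * N)) ((q : ℂ) ^ 2 * z⁻¹ ^ 2)) /
    (ThetaF ((q : ℂ) ^ (2 * N)) (z ^ 2) * ThetaF ((q : ℂ) ^ (2 * N)) (z⁻¹ ^ 2))

/-- All four theta factors occurring in `U(z)` are nonzero. -/
def thetaReg (N : ℕ) (q : ℝ) (z : ℂ) : Prop :=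
  ThetaF ((q : ℂ) ^ (2 * N)) ((q : ℂ) ^ 2 * z ^ 2) ≠ 0 ∧
  ThetaF ((q : ℂ) ^ (2 * N)) ((q : ℂ) ^ 2 * z⁻¹ ^ 2) ≠ 0 ∧
  ThetaF ((q : ℂ) ^ (2 * N)) (z ^ 2) ≠ 0 ∧
  ThetaF ((q : ℂ) ^ (2 * N)) (z⁻¹ ^ 2) ≠ 0

/-- `F_a(x;s) = ∏_{k=0}^{a−1} U(sᵏx)` for `a > 0`, `F₀ = 1`, and
`F_a(x;s) = ∏_{k=1}^{−a} U(s⁻ᵏx)⁻¹` for `a < 0`. -/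
noncomputable def Ffun (N : ℕ) (q : ℝ) (s x : ℂ) (a : ℤ) : ℂ :=
  if 0 < a then ∏ k ∈ Finset.range a.toNat, Ufun N q (s ^ (k : ℕ) * x)
  else ∏ k ∈ Finset.range (-a).toNat, (Ufun N q (s ^ (-(k : ℤ) - 1) * x))⁻¹

/-- The structure function
`Y_{m,n}(x;s,t) = F_n(x;t) F_{−n}(x;t) / (F_m(x;s) F_{−m}(x;s))`. -/
noncomputable def Yfun (N : ℕ) (q : ℝ) (s t x : ℂ) (m n : ℤ) : ℂ :=
  Ffun N q t x n * Ffun N q t x (-n) / (Ffun N q s x m * Ffun N q s x (-m))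

/-! With `p = q^{2N}`, the quasi-periodicity `Θ_p(pz) = -z⁻¹ Θ_p(z)` makes `U` invariant under
`z ↦ q^N z`, so on the surface `s^m t^n = q^{-N}` we get `U(s^{-m}x) = U(t^n x)` and
`U(s^m x) = U(t^{-n}x)`. Splitting off the end factors,
`F_a(x;u) F_{-a}(x;u) = U(x) / ((∏_{k=1}^{|a|-1} U(u^{-k}x)/U(u^k x)) · U(u^{-|a|}x))`,
so in `Y_{m,n}` the factor `U(x)` cancels and only the two boundary factors `U(s^{-|m|}x)`,
`U(t^{-|n|}x)` remain; according to the signs of `m` and `n`, the surface identities either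
cancel them against each other or absorb them into the products as their top terms. -/

open Finset

lemma multipliable_one_sub_mul_pow {p : ℂ} (hp : ‖p‖ < 1) (z : ℂ) :
    Multipliable fun j : ℕ => 1 - z * p ^ j := by
  simp_rw [sub_eq_add_neg]
  apply multipliable_one_add_of_summable
  simpa [norm_mul, norm_pow] using (summable_geometric_of_lt_one (norm_nonneg _) hp).mul_left ‖z‖

lemma qPoch_eq_one_sub_mul_qPoch {p : ℂ} (hp : ‖p‖ < 1) (z : ℂ) :
    qPoch z p = (1 - z) * qPoch (p * z) p := by
  rw [qPoch, tprod_eq_zero_mul' ((multipliable_one_sub_mul_pow hp (p * z)).congr fun j => by ring)]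
  simp only [pow_zero, mul_one, qPoch]
  congr 1
  exact tprod_congr fun j => by ring

lemma ThetaF_self_mul {p : ℂ} (hp : ‖p‖ < 1) (hp0 : p ≠ 0) {z : ℂ} (hz : z ≠ 0) :
    ThetaF p (p * z) = -z⁻¹ * ThetaF p z := by
  have hinv : p * (p * z)⁻¹ = z⁻¹ := by field_simp
  rw [ThetaF, ThetaF, hinv, qPoch_eq_one_sub_mul_qPoch hp z⁻¹, qPoch_eq_one_sub_mul_qPoch hp z]
  field_simp
  ring

lemma ThetaF_inv_self_mul {p : ℂ} (hp : ‖p‖ < 1) (hp0 : p ≠ 0) {w : ℂ} (hw : w ≠ 0) :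
    ThetaF p (p⁻¹ * w) = -(p⁻¹ * w) * ThetaF p w := by
  have h := ThetaF_self_mul hp hp0 (z := p⁻¹ * w) (by simp [hp0, hw])
  rw [mul_inv_cancel_left₀ hp0] at h
  rw [h]
  field_simp

lemma Ufun_pow_mul {N : ℕ} (hN : N ≠ 0) {q : ℝ} (hq0 : 0 < q) (hq1 : q < 1) (z : ℂ) :
    Ufun N q ((q : ℂ) ^ N * z) = Ufun N q z := by
  rcases eq_or_ne z 0 with rfl | hz
  · simp
  have hq : (q : ℂ) ≠ 0 := Complex.ofReal_ne_zero.mpr hq0.ne'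
  set p : ℂ := (q : ℂ) ^ (2 * N) with hp_def
  have hp0 : p ≠ 0 := pow_ne_zero _ hq
  have hp : ‖p‖ < 1 := by
    rw [norm_pow, Complex.norm_real, Real.norm_of_nonneg hq0.le]
    exact pow_lt_one₀ hq0.le hq1 (by omega)
  have h1 : ThetaF p ((q : ℂ) ^ 2 * ((q : ℂ) ^ N * z) ^ 2)
      = -((q : ℂ) ^ 2 * z ^ 2)⁻¹ * ThetaF p ((q : ℂ) ^ 2 * z ^ 2) := by
    rw [← ThetaF_self_mul hp hp0 (by simp [hq, hz])]; congr 1; rw [hp_def]; ring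
  have h2 : ThetaF p ((q : ℂ) ^ 2 * ((q : ℂ) ^ N * z)⁻¹ ^ 2)
      = -(p⁻¹ * ((q : ℂ) ^ 2 * z⁻¹ ^ 2)) * ThetaF p ((q : ℂ) ^ 2 * z⁻¹ ^ 2) := by
    rw [← ThetaF_inv_self_mul hp hp0 (by simp [hq, hz])]; congr 1; rw [hp_def]; ring
  have h3 : ThetaF p (((q : ℂ) ^ N * z) ^ 2) = -(z ^ 2)⁻¹ * ThetaF p (z ^ 2) := by
    rw [← ThetaF_self_mul hp hp0 (by simp [hz])]; congr 1; rw [hp_def]; ring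
  have h4 : ThetaF p (((q : ℂ) ^ N * z)⁻¹ ^ 2) = -(p⁻¹ * z⁻¹ ^ 2) * ThetaF p (z⁻¹ ^ 2) := by
    rw [← ThetaF_inv_self_mul hp hp0 (by simp [hz])]; congr 1; rw [hp_def]; ring
  have hfactor : -((q : ℂ) ^ 2 * z ^ 2)⁻¹ * -(p⁻¹ * ((q : ℂ) ^ 2 * z⁻¹ ^ 2))
      = -(z ^ 2)⁻¹ * -(p⁻¹ * z⁻¹ ^ 2) := by field_simp
  have hK : -(z ^ 2)⁻¹ * -(p⁻¹ * z⁻¹ ^ 2) ≠ 0 := by simp [hp0, hz]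
  rw [Ufun, Ufun, h1, h2, h3, h4, mul_mul_mul_comm, mul_mul_mul_comm (-(z ^ 2)⁻¹), hfactor,
    mul_div_assoc, mul_div_mul_left _ _ hK, ← mul_div_assoc]

lemma Ufun_inv_pow_mul {N : ℕ} (hN : N ≠ 0) {q : ℝ} (hq0 : 0 < q) (hq1 : q < 1) (z : ℂ) :
    Ufun N q (((q : ℂ) ^ N)⁻¹ * z) = Ufun N q z := by
  rw [← Ufun_pow_mul hN hq0 hq1, mul_inv_cancel_left₀ (pow_ne_zero _ (by exact_mod_cast hq0.ne'))]

lemma Ufun_zpow_mul_eq_of_surface {N : ℕ} (hN : N ≠ 0) {q : ℝ} (hq0 : 0 < q) (hq1 : q < 1)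
    {m n : ℤ} {s t : ℂ} (hsurf : s ^ m * t ^ n = (q : ℂ) ^ (-(N : ℤ))) (x : ℂ) {a b : ℤ}
    (hab : a = -m ∧ b = n ∨ a = m ∧ b = -n) :
    Ufun N q (s ^ a * x) = Ufun N q (t ^ b * x) := by
  have hc : (q : ℂ) ^ N ≠ 0 := pow_ne_zero _ (by exact_mod_cast hq0.ne')
  have hsurf' : s ^ m * t ^ n = ((q : ℂ) ^ N)⁻¹ := by rw [hsurf, zpow_neg, zpow_natCast]
  obtain ⟨hsm, htn⟩ := mul_ne_zero_iff.mp (hsurf' ▸ inv_ne_zero hc)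
  rcases hab with ⟨ha, hb⟩ | ⟨ha, hb⟩
  all_goals rw [ha, hb]
  · have hs_neg : s ^ (-m) = (q : ℂ) ^ N * t ^ n := by
      rw [zpow_neg, inv_eq_iff_eq_inv, mul_inv, ← hsurf']
      field_simp
    rw [hs_neg, mul_assoc, Ufun_pow_mul hN hq0 hq1]
  · have hs_pos : s ^ m = ((q : ℂ) ^ N)⁻¹ * t ^ (-n) := by
      rw [← hsurf', zpow_neg]
      field_simp
    rw [hs_pos, mul_assoc, Ufun_inv_pow_mul hN hq0 hq1]

lemma Ufun_ne_zero {N : ℕ} {q : ℝ} (hq0 : 0 < q) {z : ℂ} (hz : thetaReg N q z) :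
    Ufun N q z ≠ 0 := by
  obtain ⟨h1, h2, h3, h4⟩ := hz
  have hpre : ((q ^ ((2 : ℝ) / N - 2) : ℝ) : ℂ) ≠ 0 := by
    exact_mod_cast (Real.rpow_pos_of_pos hq0 _).ne'
  exact div_ne_zero (mul_ne_zero hpre (mul_ne_zero h1 h2)) (mul_ne_zero h3 h4)

section Products

variable {G : Type*}

lemma prod_range_eq_mul_prod_Icc [CommMonoid G] (f : ℕ → G) {M : ℕ} (hM : M ≠ 0) :
    ∏ k ∈ range M, f k = f 0 * ∏ k ∈ Icc 1 (M - 1), f k := by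
  rw [Nat.range_eq_Icc_zero_sub_one M hM, ← insert_Icc_add_one_left_eq_Icc (Nat.zero_le _),
    prod_insert (by simp), zero_add]

lemma prod_Icc_sub_one_mul [CommMonoid G] (f : ℕ → G) {M : ℕ} (hM : M ≠ 0) :
    (∏ k ∈ Icc 1 (M - 1), f k) * f M = ∏ k ∈ Icc 1 M, f k := by
  obtain ⟨M, rfl⟩ := Nat.exists_eq_succ_of_ne_zero hM
  rw [prod_Icc_succ_top (by omega), Nat.succ_sub_one]

lemma prod_range_succ_eq_prod_Icc [CommMonoid G] (f : ℕ → G) (M : ℕ) :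
    ∏ k ∈ range M, f (k + 1) = ∏ k ∈ Icc 1 M, f k := by
  rw [range_eq_Ico, prod_Ico_add' f 0 M 1, zero_add, Ico_add_one_right_eq_Icc]

lemma prod_range_div_prod_Icc_neg [DivisionCommMonoid G] (g : ℤ → G) {M : ℕ} (hM : M ≠ 0) :
    (∏ k ∈ range M, g k) / ∏ k ∈ Icc 1 M, g (-k)
      = g 0 / ((∏ k ∈ Icc 1 (M - 1), g (-k) / g k) * g (-M)) := by
  rw [prod_range_eq_mul_prod_Icc _ hM, ← prod_Icc_sub_one_mul (fun k : ℕ => g (-k)) hM,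
    prod_div_distrib, Nat.cast_zero]
  simp only [div_eq_mul_inv, mul_inv, inv_inv]
  ac_rfl

end Products

lemma Ffun_mul_Ffun_neg (N : ℕ) (q : ℝ) (u x : ℂ) (a : ℤ) :
    Ffun N q u x a * Ffun N q u x (-a)
      = (∏ k ∈ range a.natAbs, Ufun N q (u ^ (k : ℤ) * x))
        / ∏ k ∈ Icc 1 a.natAbs, Ufun N q (u ^ (-(k : ℤ)) * x) := by
  have hneg : ∀ M : ℕ, ∏ k ∈ range M, (Ufun N q (u ^ (-(k : ℤ) - 1) * x))⁻¹
      = (∏ k ∈ Icc 1 M, Ufun N q (u ^ (-(k : ℤ)) * x))⁻¹ := fun M => by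
    rw [prod_inv_distrib, ← prod_range_succ_eq_prod_Icc]
    push_cast
    simp only [neg_add']
  simp only [Ffun, zpow_natCast]
  split_ifs
  · omega
  · rw [hneg, neg_neg, show a.toNat = a.natAbs by omega, div_eq_mul_inv]
  · rw [hneg, show (-a).toNat = a.natAbs by omega, div_eq_mul_inv, mul_comm]
  · simp [show a = 0 by omega]

lemma Yfun_eq_prod_mul_prod_div {N : ℕ} {q : ℝ} {s t x : ℂ} {m n : ℤ} (hm : m ≠ 0)
    (hn : n ≠ 0) (hx : Ufun N q x ≠ 0) :
    Yfun N q s t x m n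
      = (∏ k ∈ Icc 1 (m.natAbs - 1), Ufun N q (s ^ (-(k : ℤ)) * x) / Ufun N q (s ^ (k : ℤ) * x))
        * Ufun N q (s ^ (-(m.natAbs : ℤ)) * x)
        * (∏ k ∈ Icc 1 (n.natAbs - 1), Ufun N q (t ^ (k : ℤ) * x) / Ufun N q (t ^ (-(k : ℤ)) * x))
        / Ufun N q (t ^ (-(n.natAbs : ℤ)) * x) := by
  have hs := prod_range_div_prod_Icc_neg (fun k : ℤ => Ufun N q (s ^ k * x))
    (Int.natAbs_ne_zero.mpr hm)
  have ht := prod_range_div_prod_Icc_neg (fun k : ℤ => Ufun N q (t ^ k * x))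
    (Int.natAbs_ne_zero.mpr hn)
  simp only [zpow_zero, one_mul] at hs ht
  have hinv : ∏ k ∈ Icc 1 (n.natAbs - 1), Ufun N q (t ^ (-(k : ℤ)) * x) / Ufun N q (t ^ (k : ℤ) * x)
      = (∏ k ∈ Icc 1 (n.natAbs - 1),
          Ufun N q (t ^ (k : ℤ) * x) / Ufun N q (t ^ (-(k : ℤ)) * x))⁻¹ := by
    rw [prod_div_distrib, prod_div_distrib, inv_div]
  rw [Yfun, Ffun_mul_Ffun_neg, Ffun_mul_Ffun_neg, hs, ht, div_div_div_cancel_left' _ _ hx, hinv,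
    mul_comm _ (Ufun N q (t ^ (-(n.natAbs : ℤ)) * x)), ← div_div, div_inv_eq_mul,
    div_mul_eq_mul_div]

theorem Yfun_product_formulas_general (N : ℕ) (hN : 2 ≤ N) (q : ℝ) (hq0 : 0 < q) (hq1 : q < 1)
    (m n : ℤ) (s t : ℂ)
    (hsurf : s ^ m * t ^ n = (q : ℂ) ^ (-(N : ℤ)))
    (x : ℂ)
    (hregs : ∀ k : ℤ, |k| ≤ |m| → thetaReg N q (s ^ k * x))
    (hregt : ∀ k : ℤ, |k| ≤ |n| → thetaReg N q (t ^ k * x)) :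
    (m * n < 0 →
      Yfun N q s t x m n
        = (∏ k ∈ Finset.Icc 1 (m.natAbs - 1),
            Ufun N q (s ^ (-(k : ℤ)) * x) / Ufun N q (s ^ (k : ℤ) * x))
          * ∏ k ∈ Finset.Icc 1 (n.natAbs - 1),
              Ufun N q (t ^ (k : ℤ) * x) / Ufun N q (t ^ (-(k : ℤ)) * x)) ∧
    (0 < m * n →
      (Yfun N q s t x m n
        = (∏ k ∈ Finset.Icc 1 m.natAbs,
            Ufun N q (s ^ (-(k : ℤ)) * x) / Ufun N q (s ^ (k : ℤ) * x))
          * ∏ k ∈ Finset.Icc 1 (n.natAbs - 1),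
              Ufun N q (t ^ (k : ℤ) * x) / Ufun N q (t ^ (-(k : ℤ)) * x)) ∧
      Yfun N q s t x m n
        = (∏ k ∈ Finset.Icc 1 (m.natAbs - 1),
            Ufun N q (s ^ (-(k : ℤ)) * x) / Ufun N q (s ^ (k : ℤ) * x))
          * ∏ k ∈ Finset.Icc 1 n.natAbs,
              Ufun N q (t ^ (k : ℤ) * x) / Ufun N q (t ^ (-(k : ℤ)) * x)) := by
  have hx : Ufun N q x ≠ 0 := by simpa using Ufun_ne_zero hq0 (hregs 0 (abs_nonneg m))
  have hU {a b : ℤ} := Ufun_zpow_mul_eq_of_surface (by omega) hq0 hq1 hsurf x (a := a) (b := b)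
  refine ⟨fun hmn => ?_, fun hmn => ⟨?_, ?_⟩⟩
  · have hsign := mul_neg_iff.mp hmn
    have hE : Ufun N q (s ^ (-(m.natAbs : ℤ)) * x) = Ufun N q (t ^ (-(n.natAbs : ℤ)) * x) :=
      hU (by omega)
    have hE0 : Ufun N q (t ^ (-(n.natAbs : ℤ)) * x) ≠ 0 :=
      Ufun_ne_zero hq0 (hregt _ (by simp))
    rw [Yfun_eq_prod_mul_prod_div (by omega) (by omega) hx, hE, mul_right_comm,
      mul_div_cancel_right₀ _ hE0]
  · have hsign := mul_pos_iff.mp hmn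
    have hE : Ufun N q (t ^ (-(n.natAbs : ℤ)) * x) = Ufun N q (s ^ (m.natAbs : ℤ) * x) :=
      (hU (by omega)).symm
    rw [← prod_Icc_sub_one_mul _ (by omega : m.natAbs ≠ 0),
      Yfun_eq_prod_mul_prod_div (by omega) (by omega) hx, hE]
    ring
  · have hsign := mul_pos_iff.mp hmn
    have hE : Ufun N q (s ^ (-(m.natAbs : ℤ)) * x) = Ufun N q (t ^ (n.natAbs : ℤ) * x) :=
      hU (by omega)
    rw [← prod_Icc_sub_one_mul _ (by omega : n.natAbs ≠ 0),
      Yfun_eq_prod_mul_prod_div (by omega) (by omega) hx, hE]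
    ring

/-- On the surface `s^m t^n = q^{−N}`, the structure function `Y_{m,n}` can be rewritten
as products of ratios of `U`-functions:
(i) if `mn < 0`, with ranges `1 ≤ k ≤ |m|−1` and `1 ≤ k' ≤ |n|−1`;
(ii) if `mn > 0`, with ranges `(1 ≤ k ≤ |m|, 1 ≤ k' ≤ |n|−1)` and also
`(1 ≤ k ≤ |m|−1, 1 ≤ k' ≤ |n|)`. -/
theorem Yfun_product_formulas (N : ℕ) (hN : 2 ≤ N) (q : ℝ) (hq0 : 0 < q) (hq1 : q < 1)
    (m n : ℤ) (hm : m ≠ 0) (hn : n ≠ 0) (s t : ℂ) (hs : s ≠ 0) (ht : t ≠ 0)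
    (hsurf : s ^ m * t ^ n = (q : ℂ) ^ (-(N : ℤ)))
    (x : ℂ) (hx : x ≠ 0)
    (hregs : ∀ k : ℤ, |k| ≤ |m| → thetaReg N q (s ^ k * x))
    (hregt : ∀ k : ℤ, |k| ≤ |n| → thetaReg N q (t ^ k * x)) :
    (m * n < 0 →
      Yfun N q s t x m n
        = (∏ k ∈ Finset.Icc 1 (m.natAbs - 1),
            Ufun N q (s ^ (-(k : ℤ)) * x) / Ufun N q (s ^ (k : ℤ) * x))
          * ∏ k ∈ Finset.Icc 1 (n.natAbs - 1),
              Ufun N q (t ^ (k : ℤ) * x) / Ufun N q (t ^ (-(k : ℤ)) * x)) ∧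
    (0 < m * n →
      (Yfun N q s t x m n
        = (∏ k ∈ Finset.Icc 1 m.natAbs,
            Ufun N q (s ^ (-(k : ℤ)) * x) / Ufun N q (s ^ (k : ℤ) * x))
          * ∏ k ∈ Finset.Icc 1 (n.natAbs - 1),
              Ufun N q (t ^ (k : ℤ) * x) / Ufun N q (t ^ (-(k : ℤ)) * x)) ∧
      Yfun N q s t x m n
        = (∏ k ∈ Finset.Icc 1 (m.natAbs - 1),
            Ufun N q (s ^ (-(k : ℤ)) * x) / Ufun N q (s ^ (k : ℤ) * x))
          * ∏ k ∈ Finset.Icc 1 n.natAbs,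
              Ufun N q (t ^ (k : ℤ) * x) / Ufun N q (t ^ (-(k : ℤ)) * x)) :=
  Yfun_product_formulas_general N hN q hq0 hq1 m n s t hsurf x hregs hregt
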